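/- arXiv:2105.12950 — 8 statements merged into one kernel-verified Lean document; each statement's English description precedes it below -/
import Mathlib

section
/- Let A, B, ẋ_A, ẏ_A, ẋ_B, ẏ_B be real numbers, and define the spinor square σ = (A·ẋ_B − B·ẋ_A) + i(A·ẏ_B − B·ẏ_A) ∈ ℂ. Under self-inversion through the first disk, which replaces the data (A, ẋ_A, ẏ_A) by (−A, −ẋ_A, −ẏ_A) and (B, ẋ_B, ẏ_B) by (B+2A, ẋ_B+2ẋ_A, ẏ_B+2ẏ_A), the new spinor square σ' = ((−A)(ẋ_B+2ẋ_A) − (B+2A)(−ẋ_A)) + i((−A)(ẏ_B+2ẏ_A) − (B+2A)(−ẏ_A)) satisfies σ' = −σ. Consequently, if σ = (m + ni)^2 for integers m, n, then σ' = (−n + mi)^2; in particular integrality of the tangency spinor is preserved. -/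
open Complex in
theorem spinor_square_under_self_inversion
    (A B xA yA xB yB : ℝ)
    (σ σ' : ℂ)
    (hσ : σ = (A * xB - B * xA) + (A * yB - B * yA) * Complex.I)
    (hσ' : σ' = ((-A) * (xB + 2 * xA) - (B + 2 * A) * (-xA)) +
        ((-A) * (yB + 2 * yA) - (B + 2 * A) * (-yA)) * Complex.I) :
    σ' = -σ ∧ ∀ m n : ℤ, σ = ((m : ℂ) + (n : ℂ) * Complex.I) ^ 2 →
      σ' = ((-(n : ℂ)) + (m : ℂ) * Complex.I) ^ 2 := by
  have h : σ' = -σ := by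
    rw [hσ, hσ']
    ring
  refine ⟨h, fun m n hmn => ?_⟩
  rw [h, hmn]
  ring_nf
  rw [Complex.I_sq]
  ring
end

section
/- Let a, b, c be real numbers with Q := ab + bc + ca ≥ 0, and for either choice of sign let a' = a + b + c ± 2√Q. Then a'·b + b·c + c·a' = (√Q ± (b + c))^2. In particular, if a, b, c are integers and Q is a perfect square, then a' is an integer and a'b + bc + ca' is again a perfect square, so the Descartes move preserves properness of integral triples. -/
theorem descartes_move_identity
    (a b c : ℝ) (hQ : 0 ≤ a * b + b * c + c * a) :
    ((a + b + c + 2 * Real.sqrt (a * b + b * c + c * a)) * b + b * c +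
        c * (a + b + c + 2 * Real.sqrt (a * b + b * c + c * a)) =
      (Real.sqrt (a * b + b * c + c * a) + (b + c)) ^ 2) ∧
    ((a + b + c - 2 * Real.sqrt (a * b + b * c + c * a)) * b + b * c +
        c * (a + b + c - 2 * Real.sqrt (a * b + b * c + c * a)) =
      (Real.sqrt (a * b + b * c + c * a) - (b + c)) ^ 2) ∧
    (∀ (x y z k : ℤ), x * y + y * z + z * x = k ^ 2 → 0 ≤ k →
      (∃ m : ℤ, (x + y + z + 2 * k) * y + y * z + z * (x + y + z + 2 * k) = m ^ 2) ∧
      (∃ m : ℤ, (x + y + z - 2 * k) * y + y * z + z * (x + y + z - 2 * k) = m ^ 2)) := by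
  have hs : Real.sqrt (a * b + b * c + c * a) ^ 2 = a * b + b * c + c * a :=
    Real.sq_sqrt hQ
  refine ⟨by nlinarith [hs], by nlinarith [hs], ?_⟩
  intro x y z k h hk
  exact ⟨⟨k + (y + z), by ring_nf; nlinarith⟩, ⟨k - (y + z), by ring_nf; nlinarith⟩⟩
end

section
/- Let (F_n) be the Fibonacci sequence with F_0 = 0, F_1 = 1, F_{n+1} = F_n + F_{n−1}. Then for every n ≥ 1 and either choice of sign, the integer quadruple (−F_{2n}, F_{2n+1}, F_{2n+2}, 2F_{2n+1} ± 2) satisfies the Descartes equation (a+b+c+d)^2 = 2(a^2+b^2+c^2+d^2). In particular, the triple (−F_{2n}, F_{2n+1}, F_{2n+2}) completes to an integral Descartes configuration. -/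
lemma fib_cassini_even (n : ℕ) :
    (Nat.fib (2 * n + 1) : ℤ) ^ 2 - (Nat.fib (2 * n) : ℤ) ^ 2
      - (Nat.fib (2 * n) : ℤ) * (Nat.fib (2 * n + 1) : ℤ) = 1 := by
  induction n with
  | zero => simp
  | succ k ih =>
    have h1 : 2 * (k + 1) = 2 * k + 1 + 1 := by ring
    have h2 : 2 * (k + 1) + 1 = 2 * k + 1 + 1 + 1 := by ring
    rw [h1, Nat.fib_add_two, show 2*k+1+1 = 2*k+2 from rfl, Nat.fib_add_two]
    push_cast
    ring_nf
    ring_nf at ih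
    linarith

theorem fibonacci_triple_descartes
    (n : ℕ) (hn : 1 ≤ n) (ε : ℤ) (hε : ε = 1 ∨ ε = -1) :
    ((-(Nat.fib (2 * n) : ℤ)) + (Nat.fib (2 * n + 1) : ℤ) + (Nat.fib (2 * n + 2) : ℤ) +
        (2 * (Nat.fib (2 * n + 1) : ℤ) + 2 * ε)) ^ 2 =
      2 * ((-(Nat.fib (2 * n) : ℤ)) ^ 2 + (Nat.fib (2 * n + 1) : ℤ) ^ 2 +
        (Nat.fib (2 * n + 2) : ℤ) ^ 2 + (2 * (Nat.fib (2 * n + 1) : ℤ) + 2 * ε) ^ 2) := by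
  have hc := fib_cassini_even n
  have hf : (Nat.fib (2 * n + 2) : ℤ) = (Nat.fib (2 * n) : ℤ) + (Nat.fib (2 * n + 1) : ℤ) := by
    rw [Nat.fib_add_two]; push_cast; ring
  have he : ε ^ 2 = 1 := by rcases hε with h | h <;> simp [h]
  rw [hf]; nlinarith [hc, he]
end

section
/- Let (a,b,c,d) be a quadruple of real numbers satisfying the Descartes equation with a < 0. Then the self-inverted quadruple (−a, b+2a, c+2a, d+2a) also satisfies the Descartes equation, and its weight satisfies (−a) + (b+2a) + (c+2a) + (d+2a) = (a+b+c+d) + 4a < a+b+c+d; i.e. descending self-inversion of Descartes quadruples preserves the Descartes equation and strictly decreases the weight. -/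
theorem quadruple_self_inversion_descartes
    (a b c d : ℝ)
    (hdesc : (a + b + c + d) ^ 2 = 2 * (a ^ 2 + b ^ 2 + c ^ 2 + d ^ 2))
    (ha : a < 0) :
    ((-a) + (b + 2 * a) + (c + 2 * a) + (d + 2 * a)) ^ 2 =
      2 * ((-a) ^ 2 + (b + 2 * a) ^ 2 + (c + 2 * a) ^ 2 + (d + 2 * a) ^ 2) ∧
    (-a) + (b + 2 * a) + (c + 2 * a) + (d + 2 * a) = (a + b + c + d) + 4 * a ∧
    (a + b + c + d) + 4 * a < a + b + c + d := by
  refine ⟨by nlinarith [hdesc], by ring, by linarith⟩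
end

section
/- Let (a,b,c,d) be a quadruple of integers with 0 ≤ a ≤ b ≤ c ≤ d, gcd(a,b,c,d) = 1, satisfying the Descartes equation (a+b+c+d)^2 = 2(a^2+b^2+c^2+d^2). Then the Descartes conjugate of the largest entry satisfies 2(a+b+c) − d ≤ d, with equality if and only if (a,b,c,d) = (0,0,1,1). In particular the descending Descartes move, replacing d by 2(a+b+c) − d, strictly decreases the weight a+b+c+d except on (0,0,1,1). -/
theorem descending_descartes_move_quadruple
    (a b c d : ℤ) (ha : 0 ≤ a) (hab : a ≤ b) (hbc : b ≤ c) (hcd : c ≤ d)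
    (hgcd : Int.gcd (Int.gcd (Int.gcd a b) c) d = 1)
    (hdesc : (a + b + c + d) ^ 2 = 2 * (a ^ 2 + b ^ 2 + c ^ 2 + d ^ 2)) :
    2 * (a + b + c) - d ≤ d ∧
    (2 * (a + b + c) - d = d ↔ a = 0 ∧ b = 0 ∧ c = 1 ∧ d = 1) := by
  have hb : 0 ≤ b := ha.trans hab
  have hc : 0 ≤ c := hb.trans hbc
  have key : (a + b + c - d) ^ 2 = 4 * (a * b + b * c + c * a) := by
    linear_combination -hdesc
  -- main inequality: a + b + c ≤ d
  have hle : a + b + c ≤ d := by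
    by_contra h
    push_neg at h
    set t : ℤ := a + b + c - d with ht
    have ht0 : 0 < t := by omega
    have ht2c : t ≤ 2 * c := by omega
    have h1 : t ^ 2 ≥ 4 * c * t := by
      have hab' : 0 ≤ a * b := mul_nonneg ha hb
      nlinarith [mul_nonneg hc (sub_nonneg.mpr hcd), mul_le_mul_of_nonneg_left hbc hc]
    have : 4 * c ≤ t := by
      nlinarith
    have hcneg : c ≤ 0 := by omega
    have hc0 : c = 0 := le_antisymm hcneg hc
    have : a = 0 ∧ b = 0 := by omega
    omega
  constructor
  · omega
  constructor
  · intro heq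
    have hs : a + b + c = d := by omega
    have hsum : a * b + b * c + c * a = 0 := by
      have : (a + b + c - d) ^ 2 = 0 := by rw [hs]; ring
      omega
    have hab0 : 0 ≤ a * b := mul_nonneg ha hb
    have hbc0 : 0 ≤ b * c := mul_nonneg hb hc
    have hca0 : 0 ≤ c * a := mul_nonneg hc ha
    have ha0 : a = 0 := by
      by_contra h
      have : 0 < a := lt_of_le_of_ne ha (Ne.symm h)
      nlinarith
    have hb0 : b = 0 := by
      by_contra h
      have : 0 < b := lt_of_le_of_ne hb (Ne.symm h)
      nlinarith
    have hdc : d = c := by omega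
    subst ha0 hb0
    have h1 : Int.gcd (Int.gcd (Int.gcd 0 0) c) d = Int.gcd c d := by
      simp [Int.gcd, Int.natAbs_abs]
    rw [h1, hdc, Int.gcd_self] at hgcd
    omega
  · rintro ⟨rfl, rfl, rfl, rfl⟩
    ring
end

section
/- Let v = (a,b,c,d) ∈ ℤ^4 satisfy gcd(a,b,c,d) = 1, the Descartes equation (a+b+c+d)^2 = 2(a^2+b^2+c^2+d^2), and a+b+c+d > 1. Then there exists a finite sequence X_1, …, X_n of matrices, each equal to one of the eight generators M_1, M_2, M_3, M_4, N_1, N_2, N_3, N_4 of the Descartes group, such that X_n ⋯ X_1 v is a permutation of the base quadruple (0,0,1,1). -/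
open Matrix

/-- The Apollonian group generator `M i`: agrees with the identity except in row `i`,
where the diagonal entry is `-1` and the other entries are `2`. -/
def apolloGen (i : Fin 4) : Matrix (Fin 4) (Fin 4) ℤ :=
  Matrix.of fun r s => if r = i then (if s = i then -1 else 2) else (if r = s then 1 else 0)

/-- The kaleidoscope group generator `N i`: the transpose of `M i`. -/
def kalGen (i : Fin 4) : Matrix (Fin 4) (Fin 4) ℤ :=
  (apolloGen i)ᵀ

/-! ### Auxiliary lemmas -/

lemma apollo0_mulVec (a b c d : ℤ) :
    (apolloGen 0).mulVec ![a,b,c,d] = ![-a+2*b+2*c+2*d, b, c, d] := by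
  funext r; fin_cases r <;>
    simp [apolloGen, Matrix.mulVec, dotProduct, Fin.sum_univ_four]

lemma apollo1_mulVec (a b c d : ℤ) :
    (apolloGen 1).mulVec ![a,b,c,d] = ![a, 2*a-b+2*c+2*d, c, d] := by
  funext r; fin_cases r <;>
    simp [apolloGen, Matrix.mulVec, dotProduct, Fin.sum_univ_four] <;> ring

lemma apollo2_mulVec (a b c d : ℤ) :
    (apolloGen 2).mulVec ![a,b,c,d] = ![a, b, 2*a+2*b-c+2*d, d] := by
  funext r; fin_cases r <;>
    simp [apolloGen, Matrix.mulVec, dotProduct, Fin.sum_univ_four] <;> ring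

lemma apollo3_mulVec (a b c d : ℤ) :
    (apolloGen 3).mulVec ![a,b,c,d] = ![a, b, c, 2*a+2*b+2*c-d] := by
  funext r; fin_cases r <;>
    simp [apolloGen, Matrix.mulVec, dotProduct, Fin.sum_univ_four] <;> ring

lemma kal0_mulVec (a b c d : ℤ) :
    (kalGen 0).mulVec ![a,b,c,d] = ![-a, 2*a+b, 2*a+c, 2*a+d] := by
  funext r; fin_cases r <;>
    simp [kalGen, apolloGen, Matrix.mulVec, dotProduct, Fin.sum_univ_four] <;> ring

lemma kal1_mulVec (a b c d : ℤ) :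
    (kalGen 1).mulVec ![a,b,c,d] = ![a+2*b, -b, 2*b+c, 2*b+d] := by
  funext r; fin_cases r <;>
    simp [kalGen, apolloGen, Matrix.mulVec, dotProduct, Fin.sum_univ_four] <;> ring

lemma kal2_mulVec (a b c d : ℤ) :
    (kalGen 2).mulVec ![a,b,c,d] = ![a+2*c, b+2*c, -c, 2*c+d] := by
  funext r; fin_cases r <;>
    simp [kalGen, apolloGen, Matrix.mulVec, dotProduct, Fin.sum_univ_four] <;> ring

lemma kal3_mulVec (a b c d : ℤ) :
    (kalGen 3).mulVec ![a,b,c,d] = ![a+2*d, b+2*d, c+2*d, -d] := by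
  funext r; fin_cases r <;>
    simp [kalGen, apolloGen, Matrix.mulVec, dotProduct, Fin.sum_univ_four] <;> ring

lemma extendSeq {G : Matrix (Fin 4) (Fin 4) ℤ}
    (hG : (∃ i, G = apolloGen i) ∨ (∃ i, G = kalGen i))
    {v w : Fin 4 → ℤ} (hvw : G.mulVec v = w)
    (h : ∃ (n : ℕ) (X : Fin n → Matrix (Fin 4) (Fin 4) ℤ),
      (∀ k, (∃ i, X k = apolloGen i) ∨ (∃ i, X k = kalGen i)) ∧
      ∃ σ : Equiv.Perm (Fin 4), ((List.ofFn X).reverse.prod).mulVec w = ![0, 0, 1, 1] ∘ σ) :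
    ∃ (n : ℕ) (X : Fin n → Matrix (Fin 4) (Fin 4) ℤ),
      (∀ k, (∃ i, X k = apolloGen i) ∨ (∃ i, X k = kalGen i)) ∧
      ∃ σ : Equiv.Perm (Fin 4), ((List.ofFn X).reverse.prod).mulVec v = ![0, 0, 1, 1] ∘ σ := by
  obtain ⟨n, X, hX, σ, hσ⟩ := h
  refine ⟨n + 1, Fin.cons G X, ?_, σ, ?_⟩
  · intro k
    refine Fin.cases ?_ (fun j => hX j) k
    exact hG
  · have h1 : List.ofFn (Fin.cons G X) = G :: List.ofFn X := by
      rw [List.ofFn_succ]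
      simp
    rw [h1, List.reverse_cons, List.prod_append, List.prod_singleton,
        ← Matrix.mulVec_mulVec, hvw, hσ]

lemma gcd4_one_of_dvd {a b c d : ℤ} {g : ℕ}
    (h1 : (g:ℤ) ∣ a) (h2 : (g:ℤ) ∣ b) (h3 : (g:ℤ) ∣ c) (h4 : (g:ℤ) ∣ d)
    (hgcd : Int.gcd (Int.gcd (Int.gcd a b) c) d = 1) : g = 1 := by
  have h : (g:ℤ) ∣ ((Int.gcd (Int.gcd (Int.gcd a b) c) d : ℕ) : ℤ) :=
    Int.dvd_coe_gcd (Int.dvd_coe_gcd (Int.dvd_coe_gcd h1 h2) h3) h4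
  rw [hgcd] at h
  exact Nat.dvd_one.mp (by exact_mod_cast h)

lemma gcd4_dvd (a b c d : ℤ) :
    ((Int.gcd (Int.gcd (Int.gcd a b) c) d : ℕ) : ℤ) ∣ a ∧
    ((Int.gcd (Int.gcd (Int.gcd a b) c) d : ℕ) : ℤ) ∣ b ∧
    ((Int.gcd (Int.gcd (Int.gcd a b) c) d : ℕ) : ℤ) ∣ c ∧
    ((Int.gcd (Int.gcd (Int.gcd a b) c) d : ℕ) : ℤ) ∣ d := by
  have g1 : ((Int.gcd (Int.gcd (Int.gcd a b) c) d : ℕ) : ℤ) ∣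
      ((Int.gcd (Int.gcd a b) c : ℕ) : ℤ) := Int.gcd_dvd_left _ _
  have g2 : ((Int.gcd (Int.gcd a b) c : ℕ) : ℤ) ∣ ((Int.gcd a b : ℕ) : ℤ) := Int.gcd_dvd_left _ _
  exact ⟨g1.trans (g2.trans (Int.gcd_dvd_left _ _)), g1.trans (g2.trans (Int.gcd_dvd_right _ _)),
    g1.trans (Int.gcd_dvd_right _ _), Int.gcd_dvd_right _ _⟩

lemma sumEven {a b c d : ℤ}
    (h : (a + b + c + d) ^ 2 = 2 * (a ^ 2 + b ^ 2 + c ^ 2 + d ^ 2)) :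
    2 ∣ (a + b + c + d) := by
  have h2 : Even ((a+b+c+d)^2) := ⟨a^2+b^2+c^2+d^2, by linarith⟩
  obtain ⟨k, hk⟩ := (Int.even_pow.mp h2).1
  exact ⟨k, by omega⟩

lemma negStep (a b c d : ℤ)
    (hdesc : (a + b + c + d) ^ 2 = 2 * (a ^ 2 + b ^ 2 + c ^ 2 + d ^ 2))
    (hs : 0 < a + b + c + d) : 0 < a + b + c + d + 4 * a := by
  nlinarith [sq_nonneg (b-c), sq_nonneg (b-d), sq_nonneg (c-d), sq_nonneg (b+c+d+3*a),
    sq_nonneg (b+c+d+5*a), mul_pos hs hs]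

lemma posStep (a b c d : ℤ)
    (hdesc : (a + b + c + d) ^ 2 = 2 * (a ^ 2 + b ^ 2 + c ^ 2 + d ^ 2))
    (hs : 0 < a + b + c + d) (hb : 0 ≤ b) (hc : 0 ≤ c) (hd : 0 ≤ d) :
    4 * a < 3 * (a + b + c + d) := by
  nlinarith [sq_nonneg (b+c+d), sq_nonneg (a - 3*(b+c+d)), mul_nonneg hb hc,
    mul_nonneg hb hd, mul_nonneg hc hd]

lemma maxEntry (a b c d : ℤ)
    (hgcd : Int.gcd (Int.gcd (Int.gcd a b) c) d = 1)
    (hdesc : (a + b + c + d) ^ 2 = 2 * (a ^ 2 + b ^ 2 + c ^ 2 + d ^ 2))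
    (hw2 : 2 < a + b + c + d)
    (ha : 0 ≤ a) (hb : 0 ≤ b) (hc : 0 ≤ c) (hd : 0 ≤ d) :
    a + b + c + d < 2*a ∨ a + b + c + d < 2*b ∨ a + b + c + d < 2*c ∨ a + b + c + d < 2*d := by
  by_contra h
  push_neg at h
  obtain ⟨h1, h2, h3, h4⟩ := h
  set s := a + b + c + d with hs
  have tsum : a*(s-2*a) + b*(s-2*b) + c*(s-2*c) + d*(s-2*d) = 0 := by
    have : s * s - 2*(a^2+b^2+c^2+d^2) = 0 := by rw [hs]; nlinarith [hdesc]
    linear_combination this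
  have t1 : 0 ≤ a * (s - 2*a) := mul_nonneg ha (by linarith)
  have t2 : 0 ≤ b * (s - 2*b) := mul_nonneg hb (by linarith)
  have t3 : 0 ≤ c * (s - 2*c) := mul_nonneg hc (by linarith)
  have t4 : 0 ≤ d * (s - 2*d) := mul_nonneg hd (by linarith)
  have e1 : a = 0 ∨ s = 2*a := by
    rcases mul_eq_zero.mp (by linarith : a * (s - 2*a) = 0) with h | h
    · exact Or.inl h
    · exact Or.inr (by linarith)
  have e2 : b = 0 ∨ s = 2*b := by
    rcases mul_eq_zero.mp (by linarith : b * (s - 2*b) = 0) with h | h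
    · exact Or.inl h
    · exact Or.inr (by linarith)
  have e3 : c = 0 ∨ s = 2*c := by
    rcases mul_eq_zero.mp (by linarith : c * (s - 2*c) = 0) with h | h
    · exact Or.inl h
    · exact Or.inr (by linarith)
  have e4 : d = 0 ∨ s = 2*d := by
    rcases mul_eq_zero.mp (by linarith : d * (s - 2*d) = 0) with h | h
    · exact Or.inl h
    · exact Or.inr (by linarith)
  have d1 : s ∣ 2*a := by
    rcases e1 with h | h
    · simp [h]
    · exact ⟨1, by linarith⟩
  have d2 : s ∣ 2*b := by
    rcases e2 with h | h
    · simp [h]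
    · exact ⟨1, by linarith⟩
  have d3 : s ∣ 2*c := by
    rcases e3 with h | h
    · simp [h]
    · exact ⟨1, by linarith⟩
  have d4 : s ∣ 2*d := by
    rcases e4 with h | h
    · simp [h]
    · exact ⟨1, by linarith⟩
  have b1 : (Int.gcd a b : ℤ) = a * Int.gcdA a b + b * Int.gcdB a b := Int.gcd_eq_gcd_ab a b
  have b2 : (Int.gcd (Int.gcd a b : ℤ) c : ℤ) =
      (Int.gcd a b : ℤ) * Int.gcdA (Int.gcd a b : ℤ) c + c * Int.gcdB (Int.gcd a b : ℤ) c :=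
    Int.gcd_eq_gcd_ab _ _
  have b3 : (Int.gcd (Int.gcd (Int.gcd a b : ℤ) c : ℤ) d : ℤ) =
      (Int.gcd (Int.gcd a b : ℤ) c : ℤ) * Int.gcdA (Int.gcd (Int.gcd a b : ℤ) c : ℤ) d +
      d * Int.gcdB (Int.gcd (Int.gcd a b : ℤ) c : ℤ) d := Int.gcd_eq_gcd_ab _ _
  have hone : ((Int.gcd (Int.gcd (Int.gcd a b : ℤ) c : ℤ) d : ℕ) : ℤ) = 1 := by
    exact_mod_cast hgcd
  set x1 := Int.gcdA a b; set y1 := Int.gcdB a b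
  set x2 := Int.gcdA (Int.gcd a b : ℤ) c; set y2 := Int.gcdB (Int.gcd a b : ℤ) c
  set x3 := Int.gcdA (Int.gcd (Int.gcd a b : ℤ) c : ℤ) d
  set y3 := Int.gcdB (Int.gcd (Int.gcd a b : ℤ) c : ℤ) d
  have e : (2:ℤ) = (2*a)*(x1*x2*x3) + (2*b)*(y1*x2*x3) + (2*c)*(y2*x3) + (2*d)*y3 := by
    linear_combination -2*hone + 2*b3 + 2*x3*b2 + 2*x2*x3*b1
  have hs2 : s ∣ 2 := by
    rw [e]
    exact dvd_add (dvd_add (dvd_add (d1.mul_right _) (d2.mul_right _)) (d3.mul_right _))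
      (d4.mul_right _)
  have := Int.le_of_dvd (by norm_num) hs2
  omega

lemma baseCase (a b c d : ℤ) (hsum : a + b + c + d = 2)
    (hsq : a*a + b*b + c*c + d*d = 2) :
    ∃ σ : Equiv.Perm (Fin 4), ![a,b,c,d] = ![0,0,1,1] ∘ σ := by
  have ha1 : -1 ≤ a ∧ a ≤ 1 := by
    constructor <;> nlinarith [sq_nonneg (a+1), sq_nonneg (a-1), sq_nonneg b, sq_nonneg c, sq_nonneg d]
  have hb1 : -1 ≤ b ∧ b ≤ 1 := by
    constructor <;> nlinarith [sq_nonneg (b+1), sq_nonneg (b-1), sq_nonneg a, sq_nonneg c, sq_nonneg d]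
  have hc1 : -1 ≤ c ∧ c ≤ 1 := by
    constructor <;> nlinarith [sq_nonneg (c+1), sq_nonneg (c-1), sq_nonneg b, sq_nonneg a, sq_nonneg d]
  have hd1 : -1 ≤ d ∧ d ≤ 1 := by
    constructor <;> nlinarith [sq_nonneg (d+1), sq_nonneg (d-1), sq_nonneg b, sq_nonneg c, sq_nonneg a]
  obtain ⟨ha, ha'⟩ := ha1; obtain ⟨hb, hb'⟩ := hb1
  obtain ⟨hc, hc'⟩ := hc1; obtain ⟨hd, hd'⟩ := hd1
  interval_cases a <;> interval_cases b <;> interval_cases c <;> interval_cases d <;>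
    revert hsum hsq <;> decide

lemma keyLemma : ∀ (s : ℕ) (a b c d : ℤ),
    Int.gcd (Int.gcd (Int.gcd a b) c) d = 1 →
    (a + b + c + d) ^ 2 = 2 * (a ^ 2 + b ^ 2 + c ^ 2 + d ^ 2) →
    1 < a + b + c + d → (a + b + c + d).toNat ≤ s →
    ∃ (n : ℕ) (X : Fin n → Matrix (Fin 4) (Fin 4) ℤ),
      (∀ k, (∃ i, X k = apolloGen i) ∨ (∃ i, X k = kalGen i)) ∧
      ∃ σ : Equiv.Perm (Fin 4),
        ((List.ofFn X).reverse.prod).mulVec ![a, b, c, d] = ![0, 0, 1, 1] ∘ σ := by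
  intro s
  induction s with
  | zero =>
    intro a b c d _ _ hw hs
    exfalso; omega
  | succ s IH =>
    intro a b c d hgcd hdesc hw hs
    by_cases h2 : a + b + c + d = 2
    · -- base case
      refine ⟨0, ![], fun k => k.elim0, ?_⟩
      have hsq : a*a + b*b + c*c + d*d = 2 := by nlinarith [hdesc]
      obtain ⟨σ, hσ⟩ := baseCase a b c d h2 hsq
      exact ⟨σ, by simpa [Matrix.one_mulVec] using hσ⟩
    · have heven : 2 ∣ (a + b + c + d) := sumEven hdesc
      have hw2 : 2 < a + b + c + d := by omega
      rcases lt_or_ge a 0 with hna | ha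
      · -- apply kalGen 0
        have hdesc' : (-a + (2*a+b) + (2*a+c) + (2*a+d)) ^ 2 =
            2 * ((-a)^2 + (2*a+b)^2 + (2*a+c)^2 + (2*a+d)^2) := by linear_combination hdesc
        have hpos := negStep a b c d hdesc (by linarith)
        have hev2 := sumEven hdesc'
        obtain ⟨G1, G2, G3, G4⟩ := gcd4_dvd (-a) (2*a+b) (2*a+c) (2*a+d)
        set g := Int.gcd (Int.gcd (Int.gcd (-a) (2*a+b)) (2*a+c)) (2*a+d) with hg
        have ga : (g:ℤ) ∣ a := (dvd_neg.mp G1)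
        have hgcd' : g = 1 := gcd4_one_of_dvd ga
          (by simpa using G2.sub (ga.mul_left 2))
          (by simpa using G3.sub (ga.mul_left 2))
          (by simpa using G4.sub (ga.mul_left 2)) hgcd
        refine extendSeq (Or.inr ⟨0, rfl⟩) (kal0_mulVec a b c d) ?_
        exact IH (-a) (2*a+b) (2*a+c) (2*a+d) hgcd' hdesc' (by omega) (by omega)
      rcases lt_or_ge b 0 with hnb | hb
      · have hdesc' : ((a+2*b) + (-b) + (2*b+c) + (2*b+d)) ^ 2 =
            2 * ((a+2*b)^2 + (-b)^2 + (2*b+c)^2 + (2*b+d)^2) := by linear_combination hdesc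
        have hpos := negStep b a c d (by linear_combination hdesc) (by linarith)
        have hev2 := sumEven hdesc'
        obtain ⟨G1, G2, G3, G4⟩ := gcd4_dvd (a+2*b) (-b) (2*b+c) (2*b+d)
        set g := Int.gcd (Int.gcd (Int.gcd (a+2*b) (-b)) (2*b+c)) (2*b+d) with hg
        have gb : (g:ℤ) ∣ b := (dvd_neg.mp G2)
        have hgcd' : g = 1 := gcd4_one_of_dvd
          (by simpa using G1.sub (gb.mul_left 2)) gb
          (by simpa using G3.sub (gb.mul_left 2))
          (by simpa using G4.sub (gb.mul_left 2)) hgcd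
        refine extendSeq (Or.inr ⟨1, rfl⟩) (kal1_mulVec a b c d) ?_
        exact IH (a+2*b) (-b) (2*b+c) (2*b+d) hgcd' hdesc' (by omega) (by omega)
      rcases lt_or_ge c 0 with hnc | hc
      · have hdesc' : ((a+2*c) + (b+2*c) + (-c) + (2*c+d)) ^ 2 =
            2 * ((a+2*c)^2 + (b+2*c)^2 + (-c)^2 + (2*c+d)^2) := by linear_combination hdesc
        have hpos := negStep c a b d (by linear_combination hdesc) (by linarith)
        have hev2 := sumEven hdesc'
        obtain ⟨G1, G2, G3, G4⟩ := gcd4_dvd (a+2*c) (b+2*c) (-c) (2*c+d)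
        set g := Int.gcd (Int.gcd (Int.gcd (a+2*c) (b+2*c)) (-c)) (2*c+d) with hg
        have gc : (g:ℤ) ∣ c := (dvd_neg.mp G3)
        have hgcd' : g = 1 := gcd4_one_of_dvd
          (by simpa using G1.sub (gc.mul_left 2))
          (by simpa using G2.sub (gc.mul_left 2)) gc
          (by simpa using G4.sub (gc.mul_left 2)) hgcd
        refine extendSeq (Or.inr ⟨2, rfl⟩) (kal2_mulVec a b c d) ?_
        exact IH (a+2*c) (b+2*c) (-c) (2*c+d) hgcd' hdesc' (by omega) (by omega)
      rcases lt_or_ge d 0 with hnd | hd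
      · have hdesc' : ((a+2*d) + (b+2*d) + (c+2*d) + (-d)) ^ 2 =
            2 * ((a+2*d)^2 + (b+2*d)^2 + (c+2*d)^2 + (-d)^2) := by linear_combination hdesc
        have hpos := negStep d a b c (by linear_combination hdesc) (by linarith)
        have hev2 := sumEven hdesc'
        obtain ⟨G1, G2, G3, G4⟩ := gcd4_dvd (a+2*d) (b+2*d) (c+2*d) (-d)
        set g := Int.gcd (Int.gcd (Int.gcd (a+2*d) (b+2*d)) (c+2*d)) (-d) with hg
        have gd : (g:ℤ) ∣ d := (dvd_neg.mp G4)
        have hgcd' : g = 1 := gcd4_one_of_dvd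
          (by simpa using G1.sub (gd.mul_left 2))
          (by simpa using G2.sub (gd.mul_left 2))
          (by simpa using G3.sub (gd.mul_left 2)) gd hgcd
        refine extendSeq (Or.inr ⟨3, rfl⟩) (kal3_mulVec a b c d) ?_
        exact IH (a+2*d) (b+2*d) (c+2*d) (-d) hgcd' hdesc' (by omega) (by omega)
      -- all entries nonnegative
      rcases maxEntry a b c d hgcd hdesc hw2 ha hb hc hd with hm | hm | hm | hm
      · have hdesc' : ((-a+2*b+2*c+2*d) + b + c + d) ^ 2 =
            2 * ((-a+2*b+2*c+2*d)^2 + b^2 + c^2 + d^2) := by linear_combination hdesc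
        have hpos := posStep a b c d hdesc (by linarith) hb hc hd
        have hev2 := sumEven hdesc'
        obtain ⟨G1, G2, G3, G4⟩ := gcd4_dvd (-a+2*b+2*c+2*d) b c d
        set g := Int.gcd (Int.gcd (Int.gcd (-a+2*b+2*c+2*d) b) c) d with hg
        have ga : (g:ℤ) ∣ a := by
          have h := ((G2.mul_left 2).add (G3.mul_left 2)).add (G4.mul_left 2)
          have h2 := h.sub G1
          simpa using h2
        have hgcd' : g = 1 := gcd4_one_of_dvd ga G2 G3 G4 hgcd
        refine extendSeq (Or.inl ⟨0, rfl⟩) (apollo0_mulVec a b c d) ?_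
        exact IH (-a+2*b+2*c+2*d) b c d hgcd' hdesc' (by omega) (by omega)
      · have hdesc' : (a + (2*a-b+2*c+2*d) + c + d) ^ 2 =
            2 * (a^2 + (2*a-b+2*c+2*d)^2 + c^2 + d^2) := by linear_combination hdesc
        have hpos := posStep b a c d (by linear_combination hdesc) (by linarith) ha hc hd
        have hev2 := sumEven hdesc'
        obtain ⟨G1, G2, G3, G4⟩ := gcd4_dvd a (2*a-b+2*c+2*d) c d
        set g := Int.gcd (Int.gcd (Int.gcd a (2*a-b+2*c+2*d)) c) d with hg
        have gb : (g:ℤ) ∣ b := by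
          have h := ((G1.mul_left 2).add (G3.mul_left 2)).add (G4.mul_left 2)
          have h2 := h.sub G2
          simpa using h2
        have hgcd' : g = 1 := gcd4_one_of_dvd G1 gb G3 G4 hgcd
        refine extendSeq (Or.inl ⟨1, rfl⟩) (apollo1_mulVec a b c d) ?_
        exact IH a (2*a-b+2*c+2*d) c d hgcd' hdesc' (by omega) (by omega)
      · have hdesc' : (a + b + (2*a+2*b-c+2*d) + d) ^ 2 =
            2 * (a^2 + b^2 + (2*a+2*b-c+2*d)^2 + d^2) := by linear_combination hdesc
        have hpos := posStep c a b d (by linear_combination hdesc) (by linarith) ha hb hd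
        have hev2 := sumEven hdesc'
        obtain ⟨G1, G2, G3, G4⟩ := gcd4_dvd a b (2*a+2*b-c+2*d) d
        set g := Int.gcd (Int.gcd (Int.gcd a b) (2*a+2*b-c+2*d)) d with hg
        have gc : (g:ℤ) ∣ c := by
          have h := ((G1.mul_left 2).add (G2.mul_left 2)).add (G4.mul_left 2)
          have h2 := h.sub G3
          simpa using h2
        have hgcd' : g = 1 := gcd4_one_of_dvd G1 G2 gc G4 hgcd
        refine extendSeq (Or.inl ⟨2, rfl⟩) (apollo2_mulVec a b c d) ?_
        exact IH a b (2*a+2*b-c+2*d) d hgcd' hdesc' (by omega) (by omega)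
      · have hdesc' : (a + b + c + (2*a+2*b+2*c-d)) ^ 2 =
            2 * (a^2 + b^2 + c^2 + (2*a+2*b+2*c-d)^2) := by linear_combination hdesc
        have hpos := posStep d a b c (by linear_combination hdesc) (by linarith) ha hb hc
        have hev2 := sumEven hdesc'
        obtain ⟨G1, G2, G3, G4⟩ := gcd4_dvd a b c (2*a+2*b+2*c-d)
        set g := Int.gcd (Int.gcd (Int.gcd a b) c) (2*a+2*b+2*c-d) with hg
        have gd : (g:ℤ) ∣ d := by
          have h := ((G1.mul_left 2).add (G2.mul_left 2)).add (G3.mul_left 2)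
          have h2 := h.sub G4
          simpa using h2
        have hgcd' : g = 1 := gcd4_one_of_dvd G1 G2 G3 gd hgcd
        refine extendSeq (Or.inl ⟨3, rfl⟩) (apollo3_mulVec a b c d) ?_
        exact IH a b c (2*a+2*b+2*c-d) hgcd' hdesc' (by omega) (by omega)

theorem descartes_group_reaches_base_quadruple
    (a b c d : ℤ)
    (hgcd : Int.gcd (Int.gcd (Int.gcd a b) c) d = 1)
    (hdesc : (a + b + c + d) ^ 2 = 2 * (a ^ 2 + b ^ 2 + c ^ 2 + d ^ 2))
    (hw : 1 < a + b + c + d) :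
    ∃ (n : ℕ) (X : Fin n → Matrix (Fin 4) (Fin 4) ℤ),
      (∀ k, (∃ i, X k = apolloGen i) ∨ (∃ i, X k = kalGen i)) ∧
      ∃ σ : Equiv.Perm (Fin 4),
        ((List.ofFn X).reverse.prod).mulVec ![a, b, c, d] = ![0, 0, 1, 1] ∘ σ :=
  keyLemma (a + b + c + d).toNat a b c d hgcd hdesc hw le_rfl
end

section
/- Let (a,b,c) ∈ ℤ^3 satisfy gcd(a,b,c) = 1, a + b + c > 0, and ab + bc + ca = k^2 for some nonnegative integer k. Then there is a finite sequence of moves, each move being either a permutation of the entries, a self-inversion (a,b,c) ↦ (−a, b+2a, c+2a), or a Descartes move (a,b,c) ↦ (a, b, a+b+c ± 2√(ab+bc+ca)) (the square root being an integer at every step), that transforms (a,b,c) into the base triple (0,0,1). -/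
/-- One step of a tricycle walk: a permutation of the entries, a self-inversion
through the first entry, or a Descartes move on the last entry (with integer
square root of `a*b + b*c + c*a`). -/
def TriMove : ℤ × ℤ × ℤ → ℤ × ℤ × ℤ → Prop := fun p q =>
  match p with
  | (a, b, c) =>
      q = (a, b, c) ∨ q = (a, c, b) ∨ q = (b, a, c) ∨
      q = (b, c, a) ∨ q = (c, a, b) ∨ q = (c, b, a) ∨
      q = (-a, b + 2 * a, c + 2 * a) ∨
      (∃ k : ℤ, 0 ≤ k ∧ k ^ 2 = a * b + b * c + c * a ∧
        (q = (a, b, a + b + c + 2 * k) ∨ q = (a, b, a + b + c - 2 * k)))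

lemma g3_perm (a b c : ℤ) :
    Int.gcd (Int.gcd a c) b = Int.gcd (Int.gcd a b) c ∧
    Int.gcd (Int.gcd b a) c = Int.gcd (Int.gcd a b) c ∧
    Int.gcd (Int.gcd b c) a = Int.gcd (Int.gcd a b) c ∧
    Int.gcd (Int.gcd c a) b = Int.gcd (Int.gcd a b) c ∧
    Int.gcd (Int.gcd c b) a = Int.gcd (Int.gcd a b) c := by
  simp only [Int.gcd, Int.natAbs_natCast]
  set x := a.natAbs; set y := b.natAbs; set z := c.natAbs
  refine ⟨?_, ?_, ?_, ?_, ?_⟩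
  · rw [Nat.gcd_assoc, Nat.gcd_assoc, Nat.gcd_comm z y]
  · rw [Nat.gcd_comm y x]
  · rw [Nat.gcd_comm _ x, ← Nat.gcd_assoc]
  · rw [Nat.gcd_comm z x, Nat.gcd_assoc, Nat.gcd_assoc, Nat.gcd_comm z y]
  · rw [Nat.gcd_comm z y, Nat.gcd_comm _ x, ← Nat.gcd_assoc]

lemma sorted_perm (x y z : ℤ) : ∃ p q r : ℤ, p ≤ q ∧ q ≤ r ∧
    TriMove (x, y, z) (p, q, r) ∧ p + q + r = x + y + z ∧
    Int.gcd (Int.gcd p q) r = Int.gcd (Int.gcd x y) z ∧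
    p * q + q * r + r * p = x * y + y * z + z * x := by
  obtain ⟨h1, h2, h3, h4, h5⟩ := g3_perm x y z
  rcases le_total x y with hxy | hxy <;> rcases le_total y z with hyz | hyz <;>
    rcases le_total x z with hxz | hxz
  · exact ⟨x, y, z, hxy, hyz, Or.inl rfl, by ring, rfl, by ring⟩
  · exact ⟨x, y, z, hxy, hyz, Or.inl rfl, by ring, rfl, by ring⟩
  · exact ⟨x, z, y, hxz, hyz, Or.inr (Or.inl rfl), by ring, h1, by ring⟩
  · exact ⟨z, x, y, hxz, hxy, Or.inr (Or.inr (Or.inr (Or.inr (Or.inl rfl)))), by ring, h4, by ring⟩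
  · exact ⟨y, x, z, hxy, hxz, Or.inr (Or.inr (Or.inl rfl)), by ring, h2, by ring⟩
  · exact ⟨y, z, x, hyz, hxz, Or.inr (Or.inr (Or.inr (Or.inl rfl))), by ring, h3, by ring⟩
  · exact ⟨y, x, z, hxy, hxz, Or.inr (Or.inr (Or.inl rfl)), by ring, h2, by ring⟩
  · exact ⟨z, y, x, hyz, hxy, Or.inr (Or.inr (Or.inr (Or.inr (Or.inr (Or.inl rfl))))), by ring, h5, by ring⟩

lemma key_gcd {a b c x y z : ℤ}
    (h : ∀ d : ℤ, d ∣ x → d ∣ y → d ∣ z → d ∣ a ∧ d ∣ b ∧ d ∣ c)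
    (h1 : Int.gcd (Int.gcd a b) c = 1) : Int.gcd (Int.gcd x y) z = 1 := by
  set g : ℕ := Int.gcd (Int.gcd x y) z with hg
  have hgx : (g : ℤ) ∣ x := dvd_trans (Int.gcd_dvd_left _ _) (Int.gcd_dvd_left _ _)
  have hgy : (g : ℤ) ∣ y := dvd_trans (Int.gcd_dvd_left _ _) (Int.gcd_dvd_right _ _)
  have hgz : (g : ℤ) ∣ z := Int.gcd_dvd_right _ _
  obtain ⟨ha, hb, hc⟩ := h g hgx hgy hgz
  have : (g : ℤ) ∣ ((Int.gcd (Int.gcd a b) c : ℕ) : ℤ) :=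
    Int.dvd_coe_gcd (Int.dvd_coe_gcd ha hb) hc
  rw [h1] at this
  exact_mod_cast Int.eq_one_of_dvd_one (by positivity) this

lemma reach_sorted : ∀ n : ℕ, ∀ a b c : ℤ, a ≤ b → b ≤ c →
    Int.gcd (Int.gcd a b) c = 1 → 0 < a + b + c →
    (∃ k : ℤ, 0 ≤ k ∧ a * b + b * c + c * a = k ^ 2) → a + b + c ≤ (n : ℤ) →
    Relation.ReflTransGen TriMove (a, b, c) (0, 0, 1) := by
  intro n
  induction n with
  | zero =>
    intro a b c _ _ _ hpos _ hle
    norm_num at hle; linarith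
  | succ n ih =>
    have step : ∀ x y z : ℤ, Int.gcd (Int.gcd x y) z = 1 → 0 < x + y + z →
        (∃ k : ℤ, 0 ≤ k ∧ x * y + y * z + z * x = k ^ 2) → x + y + z ≤ (n : ℤ) →
        Relation.ReflTransGen TriMove (x, y, z) (0, 0, 1) := by
      intro x y z h1 h2 h3 h4
      obtain ⟨p, q, r, hpq, hqr, hmv, hsum, hgcd', hprod⟩ := sorted_perm x y z
      exact Relation.ReflTransGen.head hmv
        (ih p q r hpq hqr (hgcd'.trans h1) (by linarith) (hprod ▸ h3) (by linarith))
    intro a b c hab hbc hgcd hpos hsq hle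
    have hle' : a + b + c ≤ (n : ℤ) + 1 := by push_cast at hle; linarith
    obtain ⟨k, hk0, hk⟩ := hsq
    rcases lt_or_ge a 0 with ha | ha
    · -- self-inversion case
      have ha1 : a ≤ -1 := by omega
      have hb : 0 < b := by
        by_contra hb
        push_neg at hb
        nlinarith [hk, sq_nonneg k, mul_nonneg (by linarith : (0:ℤ) ≤ -a) (by linarith : (0:ℤ) ≤ -b),
          mul_nonneg (by linarith : (0:ℤ) ≤ c + a + b - 1) (by linarith : (0:ℤ) ≤ -(a + b))]
      have hc : 0 < c := lt_of_lt_of_le hb hbc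
      have hpos' : 0 < -a + (b + 2 * a) + (c + 2 * a) := by
        nlinarith [hk, sq_nonneg k, sq_nonneg (b - c),
          mul_pos (by linarith : (0:ℤ) < -a) (by linarith : (0:ℤ) < b + c)]
      have hmv : TriMove (a, b, c) (-a, b + 2 * a, c + 2 * a) :=
        Or.inr (Or.inr (Or.inr (Or.inr (Or.inr (Or.inr (Or.inl rfl))))))
      refine Relation.ReflTransGen.head hmv (step _ _ _ ?_ hpos' ?_ (by linarith))
      · refine key_gcd (fun d h1 h2 h3 => ?_) hgcd
        have hda : d ∣ a := (dvd_neg).mp h1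
        refine ⟨hda, ?_, ?_⟩
        · have := h2.sub (hda.mul_left 2); simpa using this
        · have := h3.sub (hda.mul_left 2); simpa using this
      · exact ⟨k, hk0, by linear_combination hk⟩
    · -- a ≥ 0
      rcases eq_or_lt_of_le (ha.trans hab) with hb0 | hb
      · -- b = 0, hence a = 0, c = 1
        have ha0 : a = 0 := le_antisymm (hb0 ▸ hab) ha
        have hb0' : b = 0 := hb0.symm
        subst ha0; subst hb0'
        simp [Int.gcd] at hgcd
        have : c = 1 := by omega
        subst this
        exact Relation.ReflTransGen.refl
      · -- Descartes move: b ≥ 1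
        have hb1 : 1 ≤ b := hb
        have habk : a + b < 2 * k := by
          have h4 : (a + b) ^ 2 < 4 * k ^ 2 := by
            nlinarith [hk, mul_nonneg (by linarith : (0:ℤ) ≤ c - b) (by linarith : (0:ℤ) ≤ a + b),
              mul_nonneg (by linarith : (0:ℤ) ≤ b - a) ha]
          nlinarith [h4, hk0, (by linarith : (0:ℤ) < a + b + 2 * k)]
        set c' : ℤ := a + b + c - 2 * k with hc'
        have hnew : a * b + b * c' + c' * a = (a + b - k) ^ 2 := by
          rw [hc']; linear_combination hk
        have hpos' : 0 < a + b + c' := by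
          rcases le_or_gt 0 c' with h | h
          · linarith
          · have hnn : 0 ≤ a * b + b * c' + c' * a := hnew ▸ sq_nonneg _
            by_contra hcon
            push_neg at hcon
            nlinarith [hnn, sq_nonneg a, mul_nonneg ha hb.le,
              mul_nonneg (by linarith : (0:ℤ) ≤ a + b) (by linarith : (0:ℤ) ≤ -(a + b + c'))]
        have hmv : TriMove (a, b, c) (a, b, a + b + c - 2 * k) :=
          Or.inr (Or.inr (Or.inr (Or.inr (Or.inr (Or.inr (Or.inr
            ⟨k, hk0, hk.symm, Or.inr rfl⟩))))))
        refine Relation.ReflTransGen.head hmv (step _ _ _ ?_ hpos' ?_ (by linarith))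
        · refine key_gcd (fun d h1 h2 h3 => ?_) hgcd
          refine ⟨h1, h2, ?_⟩
          have hd2 : d ^ 2 ∣ (a + b - k) ^ 2 := by
            rw [← hnew]
            obtain ⟨a', rfl⟩ := h1
            obtain ⟨b', rfl⟩ := h2
            rw [← hc'] at h3
            obtain ⟨e, he⟩ := h3
            exact ⟨a' * b' + b' * e + e * a', by rw [he]; ring⟩
          have hd : d ∣ a + b - k := (Int.pow_dvd_pow_iff (by norm_num)).mp hd2
          have hdk : d ∣ k := by
            have := (h1.add h2).sub hd; simpa using this
          have h5 := (h3.add (hdk.mul_left 2)).sub (h1.add h2)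
          have he : a + b + c - 2 * k + 2 * k - (a + b) = c := by ring
          rwa [he] at h5
        · exact ⟨|a + b - k|, abs_nonneg _, by rw [hnew, sq_abs]⟩

theorem tricycle_reaches_base_triple
    (a b c : ℤ) (hgcd : Int.gcd (Int.gcd a b) c = 1)
    (hw : 0 < a + b + c)
    (hsq : ∃ k : ℤ, 0 ≤ k ∧ a * b + b * c + c * a = k ^ 2) :
    Relation.ReflTransGen TriMove (a, b, c) (0, 0, 1) := by
  obtain ⟨p, q, r, hpq, hqr, hmv, hsum, hgcd', hprod⟩ := sorted_perm a b c
  refine Relation.ReflTransGen.head hmv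
    (reach_sorted (a + b + c).toNat p q r hpq hqr (hgcd'.trans hgcd)
      (by linarith) (hprod ▸ hsq) ?_)
  rw [hsum, Int.toNat_of_nonneg (by linarith)]
end

section
/- Let m ≥ 4 be a natural number and work with m×m matrices over ℚ. Let G be the matrix with diagonal entries 3 − m and all off-diagonal entries 1. For each index i, let N_i := I − 2E_ii + 2Σ_{j≠i} E_ji and M_i := I − 2E_ii + (2/(m−3))Σ_{j≠i} E_ij, where E_kl is the matrix unit with 1 in position (k,l). Then for all i: M_i^2 = N_i^2 = I, M_i^T G M_i = G, N_i^T G N_i = G, det M_i = det N_i = −1, and for all i ≠ j: M_i N_j = N_j M_i. -/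
open Matrix

/-- Gram matrix `G = Σᵢ (3-m) Eᵢᵢ + Σ_{i≠j} Eᵢⱼ` for the `m`-dimensional Descartes form. -/
def genGram (m : ℕ) : Matrix (Fin m) (Fin m) ℚ :=
  Matrix.of fun r s => if r = s then 3 - (m : ℚ) else 1

/-- Generalized Apollonian generator `Mᵢ = I − 2Eᵢᵢ + (2/(m−3)) Σ_{j≠i} Eᵢⱼ`. -/
def genApollo (m : ℕ) (i : Fin m) : Matrix (Fin m) (Fin m) ℚ :=
  Matrix.of fun r s =>
    if r = i then (if s = i then -1 else 2 / ((m : ℚ) - 3)) else (if r = s then 1 else 0)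

/-- Generalized kaleidoscope generator `Nᵢ = I − 2Eᵢᵢ + 2 Σ_{j≠i} Eⱼᵢ`. -/
def genKal (m : ℕ) (i : Fin m) : Matrix (Fin m) (Fin m) ℚ :=
  Matrix.of fun r s =>
    if s = i then (if r = i then -1 else 2) else (if r = s then 1 else 0)

namespace HDDG

lemma key2 {m : ℕ} (i : Fin m) (A C : ℚ) :
    ∑ k : Fin m, (if k = i then A else C) = A - C + m * C := by
  have h : ∀ k : Fin m, (if k = i then A else C) = (if k = i then A - C else 0) + C := by
    intro k; split_ifs <;> ring
  simp only [h, Finset.sum_add_distrib, Finset.sum_ite_eq', Finset.mem_univ, if_true,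
    Finset.sum_const, Finset.card_univ, Fintype.card_fin, nsmul_eq_mul]

lemma key3 {m : ℕ} {i s : Fin m} (hs : s ≠ i) (A B C : ℚ) :
    ∑ k : Fin m, (if k = i then A else if k = s then B else C) = A + B - 2 * C + m * C := by
  have h : ∀ k : Fin m, (if k = i then A else if k = s then B else C)
      = (if k = i then A - C else 0) + ((if k = s then B - C else 0) + C) := by
    intro k
    by_cases hki : k = i
    · subst hki; simp [Ne.symm hs]
    · simp only [if_neg hki]; split_ifs <;> ring
  simp only [h, Finset.sum_add_distrib, Finset.sum_ite_eq', Finset.mem_univ, if_true,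
    Finset.sum_const, Finset.card_univ, Fintype.card_fin, nsmul_eq_mul]
  ring

/-- generalized row-modification matrix -/
def auxP (m : ℕ) (i : Fin m) (c : ℚ) : Matrix (Fin m) (Fin m) ℚ :=
  Matrix.of fun r s =>
    if r = i then (if s = i then -1 else c) else (if r = s then 1 else 0)

lemma genApollo_eq (m : ℕ) (i : Fin m) : genApollo m i = auxP m i (2 / ((m:ℚ) - 3)) := rfl

lemma genKal_eq (m : ℕ) (i : Fin m) : genKal m i = (auxP m i 2)ᵀ := by
  ext r s
  simp only [genKal, auxP, transpose_apply, of_apply]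
  by_cases h1 : s = i <;> by_cases h2 : r = s <;> simp [h1, h2, eq_comm]

lemma auxP_sq {m : ℕ} (i : Fin m) (c : ℚ) : auxP m i c * auxP m i c = 1 := by
  ext r s
  rw [mul_apply, one_apply]
  by_cases hr : r = i
  · subst hr
    by_cases hs : s = r
    · subst hs
      have hf : ∀ k : Fin m, auxP m s c s k * auxP m s c k s = (if k = s then 1 else (0:ℚ)) := by
        intro k; by_cases hk : k = s <;> simp [auxP, hk]
      simp only [hf, key2]; simp
    · have hf : ∀ k : Fin m, auxP m r c r k * auxP m r c k s
          = (if k = r then -c else if k = s then c else 0) := by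
        intro k
        by_cases hk : k = r
        · subst hk; simp [auxP, hs, Ne.symm hs]
        · by_cases hks : k = s <;> simp [auxP, hk, hks, hs]
      rw [Finset.sum_congr rfl fun k _ => hf k, key3 (fun h => hs h) _ _ _,
        if_neg (Ne.symm hs)]
      ring
  · have hf : ∀ k : Fin m, auxP m i c r k * auxP m i c k s = (if k = r then auxP m i c r s else 0) := by
      intro k
      by_cases hk : k = r
      · subst hk; simp [auxP, hr]
      · simp [auxP, hr, Ne.symm hk, hk]
    rw [Finset.sum_congr rfl fun k _ => hf k, Finset.sum_ite_eq', if_pos (Finset.mem_univ r)]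
    simp [auxP, hr]

lemma gram_mul_apollo {m : ℕ} (hc : (m:ℚ) - 3 ≠ 0) (i : Fin m) :
    genGram m * auxP m i (2 / ((m:ℚ) - 3)) = (auxP m i (2 / ((m:ℚ) - 3)))ᵀ * genGram m := by
  set c : ℚ := 2 / ((m:ℚ) - 3) with hcdef
  have hcg : c * ((m:ℚ) - 3) = 2 := div_mul_cancel₀ 2 hc
  ext r s
  rw [mul_apply, mul_apply]
  simp only [transpose_apply]
  by_cases hr : r = i <;> by_cases hs : s = i
  · refine Finset.sum_congr rfl fun k _ => ?_
    by_cases hk : k = i <;> simp [genGram, auxP, hk, hr, hs, mul_comm]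
  · subst hr
    have hfL : ∀ k : Fin m, genGram m r k * auxP m r c k s
        = (if k = r then (3 - (m:ℚ)) * c else if k = s then 1 else 0) := by
      intro k
      by_cases h1 : k = r <;> by_cases h2 : k = s <;>
        simp_all [genGram, auxP, eq_comm]
    have hfR : ∀ k : Fin m, auxP m r c k r * genGram m k s
        = (if k = r then -1 else (0:ℚ)) := by
      intro k
      by_cases h1 : k = r <;> simp_all [genGram, auxP, eq_comm]
    rw [Finset.sum_congr rfl fun k _ => hfL k, Finset.sum_congr rfl fun k _ => hfR k,
      key3 (fun h => hs h) _ _ _, key2]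
    nlinarith [hcg]
  · subst hs
    have hfL : ∀ k : Fin m, genGram m r k * auxP m s c k s
        = (if k = s then -1 else (0:ℚ)) := by
      intro k
      by_cases h1 : k = s <;> simp_all [genGram, auxP, eq_comm]
    have hfR : ∀ k : Fin m, auxP m s c k r * genGram m k s
        = (if k = s then c * (3 - (m:ℚ)) else if k = r then 1 else 0) := by
      intro k
      by_cases h1 : k = s <;> by_cases h2 : k = r <;>
        simp_all [genGram, auxP, eq_comm]
    rw [Finset.sum_congr rfl fun k _ => hfL k, Finset.sum_congr rfl fun k _ => hfR k,
      key2, key3 (fun h => hr h) _ _ _]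
    nlinarith [hcg]
  · have hfL : ∀ k : Fin m, genGram m r k * auxP m i c k s
        = (if k = i then c else if k = s then (if r = s then 3 - (m:ℚ) else 1) else 0) := by
      intro k
      by_cases h1 : k = i <;> by_cases h2 : k = s <;>
        simp_all [genGram, auxP, eq_comm]
    have hfR : ∀ k : Fin m, auxP m i c k r * genGram m k s
        = (if k = i then c else if k = r then (if r = s then 3 - (m:ℚ) else 1) else 0) := by
      intro k
      by_cases h1 : k = i <;> by_cases h2 : k = r <;>
        simp_all [genGram, auxP, eq_comm]
    rw [Finset.sum_congr rfl fun k _ => hfL k, Finset.sum_congr rfl fun k _ => hfR k,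
      key3 (fun h => hs h) _ _ _, key3 (fun h => hr h) _ _ _]

lemma gram_mul_kal {m : ℕ} (i : Fin m) :
    genGram m * (auxP m i 2)ᵀ = auxP m i 2 * genGram m := by
  ext r s
  rw [mul_apply, mul_apply]
  simp only [transpose_apply]
  by_cases hr : r = i <;> by_cases hs : s = i
  · refine Finset.sum_congr rfl fun k _ => ?_
    by_cases hk : k = i
    · simp [genGram, auxP, hk, hr, hs, mul_comm]
    · simp [genGram, auxP, hk, Ne.symm hk, hr, hs, mul_comm]
  · have hfL : ∀ k : Fin m, genGram m r k * auxP m i 2 s k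
        = (if k = s then 1 else (0:ℚ)) := by
      intro k; by_cases h1 : k = s <;> simp_all [genGram, auxP, eq_comm]
    have hfR : ∀ k : Fin m, auxP m i 2 r k * genGram m k s
        = (if k = i then -1 else if k = s then 2 * (3 - (m:ℚ)) else 2) := by
      intro k; by_cases h1 : k = i <;> by_cases h2 : k = s <;>
        simp_all [genGram, auxP, eq_comm] <;> ring
    rw [Finset.sum_congr rfl fun k _ => hfL k, Finset.sum_congr rfl fun k _ => hfR k,
      key2, key3 (fun h => hs h) _ _ _]
    ring
  · have hfL : ∀ k : Fin m, genGram m r k * auxP m i 2 s k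
        = (if k = i then -1 else if k = r then 2 * (3 - (m:ℚ)) else 2) := by
      intro k; by_cases h1 : k = i <;> by_cases h2 : k = r <;>
        simp_all [genGram, auxP, eq_comm] <;> ring
    have hfR : ∀ k : Fin m, auxP m i 2 r k * genGram m k s
        = (if k = r then 1 else (0:ℚ)) := by
      intro k; by_cases h1 : k = r <;> simp_all [genGram, auxP, eq_comm]
    rw [Finset.sum_congr rfl fun k _ => hfL k, Finset.sum_congr rfl fun k _ => hfR k,
      key3 (fun h => hr h) _ _ _, key2]
    ring
  · have hfL : ∀ k : Fin m, genGram m r k * auxP m i 2 s k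
        = (if k = s then (if r = s then 3 - (m:ℚ) else 1) else 0) := by
      intro k; by_cases h1 : k = s <;> simp_all [genGram, auxP, eq_comm]
    have hfR : ∀ k : Fin m, auxP m i 2 r k * genGram m k s
        = (if k = r then (if r = s then 3 - (m:ℚ) else 1) else 0) := by
      intro k; by_cases h1 : k = r <;> simp_all [genGram, auxP, eq_comm]
    rw [Finset.sum_congr rfl fun k _ => hfL k, Finset.sum_congr rfl fun k _ => hfR k,
      key2 s _ _, key2 r _ _]

lemma apollo_comm_kal {m : ℕ} {i j : Fin m} (hij : i ≠ j) {c : ℚ}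
    (hcg : c * ((m:ℚ) - 3) = 2) :
    auxP m i c * (auxP m j 2)ᵀ = (auxP m j 2)ᵀ * auxP m i c := by
  ext r s
  rw [mul_apply, mul_apply]
  simp only [transpose_apply]
  by_cases hr : r = i <;> by_cases hs : s = j
  · have hfL : ∀ k : Fin m, auxP m i c r k * auxP m j 2 s k
        = (if k = i then -2 else if k = j then -c else 2 * c) := by
      intro k; by_cases h1 : k = i <;> by_cases h2 : k = j <;>
        simp_all [auxP, eq_comm] <;> ring
    have hfR : ∀ k : Fin m, auxP m j 2 k r * auxP m i c k s
        = (if k = i then c else if k = j then 2 else 0) := by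
      intro k; by_cases h1 : k = i <;> by_cases h2 : k = j <;>
        simp_all [auxP, eq_comm]
    rw [Finset.sum_congr rfl fun k _ => hfL k, Finset.sum_congr rfl fun k _ => hfR k,
      key3 (Ne.symm hij) _ _ _, key3 (Ne.symm hij) _ _ _]
    linear_combination 2 * hcg
  · have hfL : ∀ k : Fin m, auxP m i c r k * auxP m j 2 s k
        = (if k = s then (if s = i then -1 else c) else 0) := by
      intro k; by_cases h1 : k = s <;> by_cases h2 : k = i <;>
        simp_all [auxP, eq_comm]
    have hfR : ∀ k : Fin m, auxP m j 2 k r * auxP m i c k s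
        = (if k = i then (if s = i then -1 else c) else 0) := by
      intro k; by_cases h1 : k = i <;> by_cases h2 : k = j <;> by_cases h3 : k = s <;>
        simp_all [auxP, eq_comm]
    rw [Finset.sum_congr rfl fun k _ => hfL k, Finset.sum_congr rfl fun k _ => hfR k,
      key2, key2]
  · have hfL : ∀ k : Fin m, auxP m i c r k * auxP m j 2 s k
        = (if k = r then (if r = j then -1 else 2) else 0) := by
      intro k; by_cases h1 : k = r <;> by_cases h2 : k = j <;>
        simp_all [auxP, eq_comm]
    have hfR : ∀ k : Fin m, auxP m j 2 k r * auxP m i c k s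
        = (if k = j then (if r = j then -1 else 2) else 0) := by
      intro k; by_cases h1 : k = j <;> by_cases h2 : k = i <;> by_cases h3 : k = r <;>
        simp_all [auxP, eq_comm]
    rw [Finset.sum_congr rfl fun k _ => hfL k, Finset.sum_congr rfl fun k _ => hfR k,
      key2, key2]
  · have hfL : ∀ k : Fin m, auxP m i c r k * auxP m j 2 s k
        = (if k = r then (if r = s then 1 else 0) else 0) := by
      intro k; by_cases h1 : k = r <;> by_cases h2 : k = s <;>
        simp_all [auxP, eq_comm]
    have hfR : ∀ k : Fin m, auxP m j 2 k r * auxP m i c k s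
        = (if k = r then (if r = s then 1 else 0) else 0) := by
      intro k; simp only [auxP, of_apply]; split_ifs <;> simp_all
    rw [Finset.sum_congr rfl fun k _ => hfL k, Finset.sum_congr rfl fun k _ => hfR k]

lemma auxP_det {m : ℕ} (i : Fin m) (c : ℚ) : (auxP m i c).det = -1 := by
  have hrow : (∑ k, (if k = i then (-1:ℚ) else c) • (1 : Matrix (Fin m) (Fin m) ℚ) k)
      = fun s => if s = i then -1 else c := by
    funext s
    rw [Finset.sum_apply]
    have hf : ∀ k : Fin m, ((if k = i then (-1:ℚ) else c) • (1 : Matrix (Fin m) (Fin m) ℚ) k) s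
        = (if k = s then (if s = i then -1 else c) else 0) := by
      intro k
      by_cases h1 : k = s <;> simp_all [Matrix.one_apply]
    rw [Finset.sum_congr rfl fun k _ => hf k, Finset.sum_ite_eq', if_pos (Finset.mem_univ s)]
  have h : auxP m i c = (1 : Matrix (Fin m) (Fin m) ℚ).updateRow i
      (∑ k, (if k = i then (-1:ℚ) else c) • (1 : Matrix (Fin m) (Fin m) ℚ) k) := by
    rw [hrow]
    ext r s
    rw [Matrix.updateRow_apply]
    by_cases hr : r = i <;> simp [auxP, hr, Matrix.one_apply]
  rw [h, Matrix.det_updateRow_sum]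
  simp

end HDDG

theorem higher_dim_descartes_group_generators (m : ℕ) (hm : 4 ≤ m) :
    (∀ i : Fin m,
      genApollo m i * genApollo m i = 1 ∧
      genKal m i * genKal m i = 1 ∧
      (genApollo m i)ᵀ * genGram m * genApollo m i = genGram m ∧
      (genKal m i)ᵀ * genGram m * genKal m i = genGram m ∧
      (genApollo m i).det = -1 ∧
      (genKal m i).det = -1) ∧
    (∀ i j : Fin m, i ≠ j → genApollo m i * genKal m j = genKal m j * genApollo m i) := by
  have hm4 : (4:ℚ) ≤ (m:ℚ) := by exact_mod_cast hm
  have hc : (m:ℚ) - 3 ≠ 0 := by linarith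
  have hcg : (2 / ((m:ℚ) - 3)) * ((m:ℚ) - 3) = 2 := div_mul_cancel₀ 2 hc
  constructor
  · intro i
    have hMM : genApollo m i * genApollo m i = 1 := by
      rw [HDDG.genApollo_eq]; exact HDDG.auxP_sq i _
    have hNN : genKal m i * genKal m i = 1 := by
      rw [HDDG.genKal_eq, ← Matrix.transpose_mul, HDDG.auxP_sq, Matrix.transpose_one]
    refine ⟨hMM, hNN, ?_, ?_, ?_, ?_⟩
    · rw [HDDG.genApollo_eq, mul_assoc, HDDG.gram_mul_apollo hc, ← mul_assoc,
        ← Matrix.transpose_mul, HDDG.auxP_sq, Matrix.transpose_one, one_mul]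
    · rw [HDDG.genKal_eq, Matrix.transpose_transpose, mul_assoc, HDDG.gram_mul_kal,
        ← mul_assoc, HDDG.auxP_sq, one_mul]
    · rw [HDDG.genApollo_eq]; exact HDDG.auxP_det i _
    · rw [HDDG.genKal_eq, Matrix.det_transpose]; exact HDDG.auxP_det i _
  · intro i j hij
    rw [HDDG.genApollo_eq, HDDG.genKal_eq]
    exact HDDG.apollo_comm_kal hij hcg
end
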